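/- arXiv:2001.07158 — 3 statements merged into one kernel-verified Lean document; each statement's English description precedes it below -/
import Mathlib

section
/- Let G^τ = (V, E^τ) be a temporal graph with maximum timestamp t, coloring c : V → {1,…,k}, and let s, d be two new vertices not in V. Construct G^{τ'} = (V ∪ {s,d}, E^{τ'}) where E^{τ'} = { (u,v,i+1) : (u,v,i) ∈ E^τ } ∪ { (s,u,1) : u ∈ V } ∪ { (u,d,t+2) : u ∈ V }, and extend the coloring by c(s) = k+1 and c(d) = k+2. Then G^τ contains a temporal path of length k−1 whose k vertices have pairwise distinct colors if and only if G^{τ'} contains a temporal path of length k+1 starting at s, ending at d, whose internal vertices have pairwise distinct colors from {1,…,k}. -/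
/-- `v 0, …, v (k-1)` together with timestamps `ts 0, …, ts (k-2)` form a temporal
path with `k` vertices (length `k-1`) in the temporal graph with edge set `E`:
the vertices are distinct, consecutive vertices are joined by temporal edges,
and the timestamps are positive and strictly increasing. -/
def IsTemporalPath {V : Type*} (E : Set (V × V × ℕ)) (k : ℕ)
    (v : ℕ → V) (ts : ℕ → ℕ) : Prop :=
  (∀ i j, i < k → j < k → v i = v j → i = j) ∧
  (∀ i, i + 1 < k → (v i, v (i + 1), ts i) ∈ E) ∧
  (∀ i, i + 2 < k → ts i < ts (i + 1)) ∧
  (∀ i, i + 1 < k → 1 ≤ ts i)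

/-- `v 0, …, v (k-1)` is a path with `k` vertices (length `k-1`) in the static
graph with edge set `E`. -/
def IsStaticPath {V : Type*} (E : Set (V × V)) (k : ℕ) (v : ℕ → V) : Prop :=
  (∀ i j, i < k → j < k → v i = v j → i = j) ∧
  (∀ i, i + 1 < k → (v i, v (i + 1)) ∈ E)

set_option maxHeartbeats 1000000 in
/-- Reduction from `ColorfulPath` to `(s,d)-ColorfulPath`.
New vertices `s = Sum.inr true` and `d = Sum.inr false` are added, all original
timestamps are shifted by one, `s` is joined to all original vertices at time `1`
and all original vertices are joined to `d` at time `t+2`; the coloring is extended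
by `c s = k+1`, `c d = k+2`.  Then the original graph has a colorful temporal path
of length `k-1` iff the new graph has a temporal path of length `k+1` from `s` to
`d` whose internal vertices have pairwise distinct colors from `{1,…,k}`. -/
theorem stmt3 {V : Type*} (E : Set (V × V × ℕ)) (k t : ℕ)
    (c : V → ℕ) (hc : ∀ v, c v ∈ Finset.Icc 1 k)
    (ht : ∀ e ∈ E, e.2.2 ≤ t)
    (E' : Set ((V ⊕ Bool) × (V ⊕ Bool) × ℕ))
    (hE' : E' = {e | (∃ u w i, (u, w, i) ∈ E ∧ e = (Sum.inl u, Sum.inl w, i + 1)) ∨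
        (∃ u : V, e = (Sum.inr true, Sum.inl u, 1)) ∨
        (∃ u : V, e = (Sum.inl u, Sum.inr false, t + 2))})
    (c' : V ⊕ Bool → ℕ)
    (hc' : c' = Sum.elim c (fun b => if b then k + 1 else k + 2)) :
    (∃ (v : ℕ → V) (ts : ℕ → ℕ), IsTemporalPath E k v ts ∧
        (∀ i j, i < k → j < k → c (v i) = c (v j) → i = j)) ↔
      (∃ (v : ℕ → V ⊕ Bool) (ts : ℕ → ℕ), IsTemporalPath E' (k + 2) v ts ∧
        v 0 = Sum.inr true ∧ v (k + 1) = Sum.inr false ∧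
        (∀ i j, 1 ≤ i → i ≤ k → 1 ≤ j → j ≤ k → c' (v i) = c' (v j) → i = j) ∧
        (∀ i, 1 ≤ i → i ≤ k → c' (v i) ∈ Finset.Icc 1 k)) := by
  subst hE' hc'
  constructor
  · rintro ⟨v, ts, ⟨hinj, hedge, hmono, hpos⟩, hcol⟩
    rcases Nat.eq_zero_or_pos k with hk | hk
    · subst hk
      exact absurd (hc (v 0)) (by simp)
    refine ⟨fun i => if i = 0 then Sum.inr true else if i ≤ k then Sum.inl (v (i - 1))
        else Sum.inr false,
      fun i => if i = 0 then 1 else if i < k then ts (i - 1) + 1 else t + 2,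
      ⟨?_, ?_, ?_, ?_⟩, by norm_num, by norm_num [Nat.lt_irrefl], ?_, ?_⟩
    · intro i j hi hj h
      simp only at h
      split_ifs at h with h1 h2 h3 h4 h5 h6 h7
      all_goals try omega
      all_goals simp only [Sum.inl.injEq, Sum.inr.injEq, reduceCtorEq] at h
      · have := hinj _ _ (by omega) (by omega) h
        omega
      all_goals omega
    · intro n hn
      show ((if n = 0 then Sum.inr true else if n ≤ k then Sum.inl (v (n - 1)) else Sum.inr false),
        (if n + 1 = 0 then Sum.inr true else if n + 1 ≤ k then Sum.inl (v n) else Sum.inr false),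
        (if n = 0 then 1 else if n < k then ts (n - 1) + 1 else t + 2)) ∈ _
      rcases Nat.eq_zero_or_pos n with h0 | h0
      · subst h0
        refine Or.inr (Or.inl ⟨v 0, ?_⟩)
        norm_num [hk]
        try exact fun h => absurd h (by omega)
      rcases Nat.lt_or_ge n k with hnk | hnk
      · refine Or.inl ⟨v (n - 1), v n, ts (n - 1), ?_, ?_⟩
        · have := hedge (n - 1) (by omega)
          rwa [show n - 1 + 1 = n from by omega] at this
        · norm_num [show ¬ n = 0 from by omega, show n ≤ k from by omega,
            show n + 1 ≤ k from by omega, hnk]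
      · have hnk' : n = k := by omega
        subst hnk'
        refine Or.inr (Or.inr ⟨v (n - 1), ?_⟩)
        norm_num [show ¬ n = 0 from by omega, show ¬ n + 1 ≤ n from by omega,
          show ¬ n < n from by omega]
    · intro n hn
      show (if n = 0 then 1 else if n < k then ts (n - 1) + 1 else t + 2) <
        (if n + 1 = 0 then 1 else if n + 1 < k then ts n + 1 else t + 2)
      rcases Nat.eq_zero_or_pos n with h0 | h0
      · subst h0
        rcases Nat.lt_or_ge 1 k with h1 | h1
        · have := hpos 0 (by omega)
          norm_num [h1]
          omega
        · norm_num [show ¬ 1 < k from by omega]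
      rcases Nat.lt_or_ge (n + 1) k with h1 | h1
      · have := hmono (n - 1) (by omega)
        rw [show n - 1 + 1 = n from by omega] at this
        norm_num [show ¬ n = 0 from by omega, show n < k from by omega, h1]
        omega
      · have := ht _ (hedge (n - 1) (by omega))
        simp only at this
        norm_num [show ¬ n = 0 from by omega, show n < k from by omega,
          show ¬ n + 1 < k from by omega]
        omega
    · intro n hn
      show 1 ≤ (if n = 0 then 1 else if n < k then ts (n - 1) + 1 else t + 2)
      split_ifs <;> omega
    · intro i j hi1 hi2 hj1 hj2 h
      simp only [if_neg (by omega : ¬ i = 0), if_pos hi2,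
        if_neg (by omega : ¬ j = 0), if_pos hj2, Sum.elim_inl] at h
      have := hcol (i - 1) (j - 1) (by omega) (by omega) h
      omega
    · intro i hi1 hi2
      simp only [if_neg (by omega : ¬ i = 0), if_pos hi2, Sum.elim_inl]
      exact hc _
  · rintro ⟨v, ts, ⟨hinj, hedge, hmono, hpos⟩, h0, hk1, hcol, hicc⟩
    have hV : ∀ i, 1 ≤ i → i ≤ k → ∃ u, v i = Sum.inl u := by
      intro i h1 h2
      have hI := hicc i h1 h2
      cases hvi : v i with
      | inl u => exact ⟨u, rfl⟩
      | inr b =>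
        rw [hvi] at hI
        simp at hI
        cases b <;> simp at hI <;> omega
    have hk : 1 ≤ k := by
      by_contra hk0
      have hk0 : k = 0 := by omega
      subst hk0
      have he := hedge 0 (by omega)
      rw [h0] at he
      simp only [Nat.zero_add] at hk1
      rw [hk1] at he
      rcases he with ⟨a, b, m, _, he⟩ | ⟨a, he⟩ | ⟨a, he⟩ <;> simp at he
    choose u hu using hV
    set w : ℕ → V := fun i =>
      if h : 1 ≤ i + 1 ∧ i + 1 ≤ k then u (i + 1) h.1 h.2 else u 1 le_rfl hk with hw
    have hwv : ∀ i, i < k → v (i + 1) = Sum.inl (w i) := by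
      intro i hik
      simp only [hw]
      rw [dif_pos (⟨by omega, by omega⟩ : 1 ≤ i + 1 ∧ i + 1 ≤ k)]
      exact hu (i + 1) _ _
    have hEmem : ∀ i, i + 1 < k → (w i, w (i + 1), ts (i + 1) - 1) ∈ E := by
      intro i hik
      have he := hedge (i + 1) (by omega)
      rw [hwv i (by omega), hwv (i + 1) (by omega)] at he
      rcases he with ⟨a, b, m, hm, he⟩ | ⟨a, he⟩ | ⟨a, he⟩
      · simp only [Prod.mk.injEq, Sum.inl.injEq] at he
        obtain ⟨hA, hB, hC⟩ := he
        subst hA hB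
        have hm' : ts (i + 1) - 1 = m := by omega
        rw [hm']
        exact hm
      · simp at he
      · simp at he
    refine ⟨w, fun i => ts (i + 1) - 1, ⟨?_, hEmem, ?_, ?_⟩, ?_⟩
    · intro i j hi hj h
      have := hinj (i + 1) (j + 1) (by omega) (by omega)
        (by rw [hwv i hi, hwv j hj, h])
      omega
    · intro i hi
      show ts (i + 1) - 1 < ts (i + 1 + 1) - 1
      have h1 := hmono (i + 1) (by omega)
      have h2 := hpos (i + 1) (by omega)
      omega
    · intro i hi
      show 1 ≤ ts (i + 1) - 1
      have h1 := hmono i (by omega)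
      have h2 := hpos i (by omega)
      omega
    · intro i j hi hj h
      have heq : Sum.elim c (fun b => if b then k + 1 else k + 2) (v (i + 1)) =
          Sum.elim c (fun b => if b then k + 1 else k + 2) (v (j + 1)) := by
        rw [hwv i hi, hwv j hj]
        simpa using h
      have := hcol (i + 1) (j + 1) (by omega) (by omega) (by omega) (by omega) heq
      omega
end

section
/- Let G = (V,E) be a static graph and k a positive integer. Construct the temporal graph G^τ = (V, E^τ) with E^τ = { (u,v,i) : (u,v) ∈ E, i ∈ {1,…,k} }, and let T = (1,2,…,k) be a tuple of prescribed timestamps. Then G contains a path with k+1 vertices if and only if G^τ contains a temporal path v₁ e₁ v₂ … e_k v_{k+1} in which the timestamp of the i-th edge eᵢ is exactly i for every i ∈ {1,…,k}. -/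
/-- For a static graph `G` and positive integer `k`, with
`E^τ = {(u,v,i) : (u,v) ∈ E, 1 ≤ i ≤ k}` and the prescribed timestamps
`T = (1,…,k)`, the graph `G` contains a path with `k+1` vertices iff `G^τ`
contains a temporal path with `k+1` vertices whose `i`-th edge has timestamp
exactly `i`. -/
theorem stmt4 {V : Type*} (E : Set (V × V)) (k : ℕ) (hk : 0 < k) :
    (∃ v : ℕ → V, IsStaticPath E (k + 1) v) ↔
      (∃ (v : ℕ → V) (ts : ℕ → ℕ),
        IsTemporalPath {e : V × V × ℕ | (e.1, e.2.1) ∈ E ∧ 1 ≤ e.2.2 ∧ e.2.2 ≤ k}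
          (k + 1) v ts ∧
        (∀ i, i < k → ts i = i + 1)) := by
  constructor
  · rintro ⟨v, hinj, hadj⟩
    refine ⟨v, fun i => i + 1, ⟨hinj, ?_, ?_, ?_⟩, fun i _ => rfl⟩
    · intro i hi
      exact ⟨hadj i hi, by simp, by simp; omega⟩
    · intro i _; simp
    · intro i _; simp
  · rintro ⟨v, ts, ⟨hinj, hadj, _, _⟩, _⟩
    exact ⟨v, hinj, fun i hi => (hadj i hi).1⟩
end

section
/- Let P(x₁,…,x_n) be a multivariate polynomial over a field (or over GF(2^b)), and let L be a set of k labels. For each i ∈ {1,…,n} and j ∈ L introduce a variable z_{i,j}, and for A ⊆ L set zᵢ^A = Σ_{j∈A} z_{i,j}. Suppose P is homogeneous of degree k in the x-variables. Then the polynomial Q(z) = Σ_{A ⊆ L} P(z₁^A, …, z_n^A), computed in characteristic 2, is identically zero if and only if P has no multilinear monomial of degree k; equivalently, Q is not identically zero as a polynomial in the z-variables if and only if P contains at least one multilinear monomial. -/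
/-!
Write each monomial `x^m` of `P` (of degree `k`) as a word `x_{w 1} ⋯ x_{w k}`. Expanding
`∏ₜ z_{w t}^A` gives a sum over maps `p : [k] → A`, and `p` occurs once for every `A ⊇ im p`,
i.e. `2^(k - |im p|)` times; in characteristic 2 only the bijections survive, so the part of `Q`
coming from `x^m` is the permanent of the `k × k` matrix `(z_{w t, j})`. In characteristic 2 the
permanent is the determinant, which vanishes when a variable repeats (two equal rows). If `w` is
injective, the monomial `∏ⱼ z_{w j, j}` occurs in this permanent exactly once and in no other
monomial's permanent, so its coefficient in `Q` is the coefficient of `x^m` in `P`.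
-/

open Finset MvPolynomial

namespace MultilinearSieve

variable {ι σ : Type*} [Fintype ι]

noncomputable def wordExponent (w : ι → σ) : σ →₀ ℕ := ∑ t, Finsupp.single (w t) 1

lemma wordExponent_apply [DecidableEq σ] (w : ι → σ) (a : σ) :
    wordExponent w a = #{t | w t = a} := by
  simp [wordExponent, Finsupp.finsetSum_apply, Finsupp.single_apply]

lemma wordExponent_comp_equiv {κ : Type*} [Fintype κ] (w : ι → σ) (e : κ ≃ ι) :
    wordExponent (w ∘ e) = wordExponent w :=
  e.sum_comp fun t => Finsupp.single (w t) 1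

lemma prod_pow_wordExponent {M : Type*} [CommMonoid M] [Fintype σ] (w : ι → σ) (x : σ → M) :
    ∏ a, x a ^ wordExponent w a = ∏ t, x (w t) := by
  classical
  rw [← Fintype.prod_fiberwise' w]
  simp [wordExponent_apply, Fintype.card_subtype]

lemma monomial_wordExponent {R : Type*} [CommSemiring R] (w : ι → σ) :
    monomial (wordExponent w) (1 : R) = ∏ t, X (w t) :=
  monomial_sum_one _ _

lemma injective_iff_wordExponent_le_one {w : ι → σ} :
    Function.Injective w ↔ ∀ a, wordExponent w a ≤ 1 := by
  classical
  simp only [wordExponent_apply, Finset.card_le_one, mem_filter, mem_univ, true_and]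
  exact ⟨fun h a t ht u hu => h (ht.trans hu.symm), fun h t u htu => h _ t htu u rfl⟩

lemma mem_support_wordExponent {w : ι → σ} {a : σ} :
    a ∈ (wordExponent w).support ↔ ∃ t, w t = a := by
  classical
  simp [wordExponent_apply]

lemma wordExponent_graph_injective :
    Function.Injective fun f : ι → σ => wordExponent fun t => (f t, t) := by
  intro f f' (h : wordExponent _ = wordExponent _)
  funext j
  have hj : (f j, j) ∈ (wordExponent fun t => (f' t, t)).support :=
    h ▸ mem_support_wordExponent.mpr ⟨j, rfl⟩
  obtain ⟨t, ht⟩ := mem_support_wordExponent.mp hj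
  simp only [Prod.ext_iff] at ht
  rw [← ht.1, ht.2]

lemma exists_wordExponent_eq_of_degree_eq_card (m : σ →₀ ℕ) (hm : m.degree = Fintype.card ι) :
    ∃ w : ι → σ, wordExponent w = m := by
  suffices h : ∀ (k : ℕ) (m : σ →₀ ℕ), m.degree = k → ∃ w : Fin k → σ, wordExponent w = m by
    obtain ⟨w, hw⟩ := h _ m hm
    exact ⟨w ∘ Fintype.equivFin ι, (wordExponent_comp_equiv w _).trans hw⟩
  intro k
  induction k with
  | zero =>
    intro m hm
    exact ⟨Fin.elim0, by simp [wordExponent, (Finsupp.degree_eq_zero_iff m).mp hm]⟩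
  | succ k ih =>
    intro m hm
    obtain ⟨i, hi⟩ : m.support.Nonempty := by
      rw [Finsupp.support_nonempty_iff]; rintro rfl; simp at hm
    obtain ⟨m', rfl⟩ := le_iff_exists_add'.mp
      (show Finsupp.single i 1 ≤ m by simpa [Nat.one_le_iff_ne_zero] using hi)
    obtain ⟨w, hw⟩ := ih m' (by simpa using hm)
    refine ⟨Fin.cons i w, ?_⟩
    simp [wordExponent, Fin.sum_univ_succ, ← hw, add_comm]

section Sieve

variable {R : Type*} [CommSemiring R] [CharP R 2] {κ : Type*} [Fintype κ] [DecidableEq κ]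

lemma natCast_card_supersets (B : Finset κ) :
    ((#{A ∈ (univ : Finset κ).powerset | B ⊆ A} : ℕ) : R) = if B = univ then 1 else 0 := by
  rw [← Finset.Icc_eq_filter_powerset, Finset.card_Icc_finset (subset_univ B)]
  split_ifs with hB
  · simp [hB]
  · have : #B < #(univ : Finset κ) := Finset.card_lt_card (Finset.ssubset_univ_iff.mpr hB)
    rw [Nat.cast_pow, Nat.cast_ofNat, CharTwo.two_eq_zero, zero_pow (by omega)]

lemma sum_powerset_prod_sum_eq_sum_surjective [DecidableEq ι] (M : ι → κ → R) :
    ∑ A ∈ (univ : Finset κ).powerset, ∏ i, ∑ j ∈ A, M i j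
      = ∑ p : ι → κ with p.Surjective, ∏ i, M i (p i) := by
  have hexpand : ∀ A : Finset κ,
      ∏ i, ∑ j ∈ A, M i j = ∑ p : ι → κ with univ.image p ⊆ A, ∏ i, M i (p i) := by
    intro A
    rw [Finset.prod_univ_sum]
    congr 1; ext p; simp [Finset.image_subset_iff]
  simp_rw [hexpand, Finset.sum_filter]
  rw [Finset.sum_comm]
  refine Finset.sum_congr rfl fun p _ => ?_
  rw [← Finset.sum_filter, Finset.sum_const, nsmul_eq_mul, natCast_card_supersets]
  simp only [Finset.eq_univ_iff_forall, Finset.mem_image, mem_univ, true_and, ite_mul, one_mul,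
    zero_mul]
  rfl

lemma sum_powerset_prod_sum_eq_permanent [DecidableEq ι] (M : Matrix ι ι R) :
    ∑ A ∈ (univ : Finset ι).powerset, ∏ i, ∑ j ∈ A, M i j = M.permanent := by
  rw [sum_powerset_prod_sum_eq_sum_surjective (M := M), ← Matrix.permanent_transpose,
    Matrix.permanent]
  symm
  refine Finset.sum_bij (fun τ _ => ⇑τ) (fun τ _ => by simpa using τ.surjective)
    (fun _ _ _ _ h => Equiv.coe_fn_injective h) (fun p hp => ?_) (fun _ _ => rfl)
  have hp : p.Surjective := by simpa using hp
  exact ⟨Equiv.ofBijective p ⟨Finite.injective_iff_surjective.mpr hp, hp⟩, mem_univ _, rfl⟩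

end Sieve

section Labels

variable {R : Type*} [CommSemiring R]

variable (R) in
noncomputable def labelMatrix (w : ι → σ) : Matrix ι ι (MvPolynomial (σ × ι) R) :=
  Matrix.of fun t j => X (w t, j)

variable (ι R) in
noncomputable def monomialSieve [Fintype σ] (m : σ →₀ ℕ) : MvPolynomial (σ × ι) R :=
  ∑ A ∈ (univ : Finset ι).powerset, ∏ i, (∑ j ∈ A, X (i, j)) ^ m i

lemma sum_powerset_eval₂_eq_sum_monomialSieve [Fintype σ] (P : MvPolynomial σ R) :
    ∑ A ∈ (univ : Finset ι).powerset,
        eval₂ C (fun i => ∑ j ∈ A, (X (i, j) : MvPolynomial (σ × ι) R)) P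
      = ∑ m ∈ P.support, C (coeff m P) * monomialSieve ι R m := by
  simp_rw [eval₂_eq', monomialSieve, mul_sum]
  exact Finset.sum_comm

lemma monomialSieve_wordExponent [CharP R 2] [DecidableEq ι] [Fintype σ] (w : ι → σ) :
    monomialSieve ι R (wordExponent w) = (labelMatrix R w).permanent := by
  simp_rw [monomialSieve, prod_pow_wordExponent]
  exact sum_powerset_prod_sum_eq_permanent _

lemma coeff_permanent_labelMatrix [DecidableEq ι] [DecidableEq σ] (f w : ι → σ) :
    coeff (wordExponent fun j => (f j, j)) (labelMatrix R w).permanent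
      = #{τ : Equiv.Perm ι | w ∘ τ = f} := by
  have hterm : ∀ τ : Equiv.Perm ι, ∏ j, labelMatrix R w (τ j) j
      = monomial (wordExponent fun j => (w (τ j), j)) 1 := by
    intro τ
    simp [labelMatrix, monomial_wordExponent]
  simp_rw [Matrix.permanent, hterm, coeff_sum, coeff_monomial]
  have hgraph : ∀ τ : Equiv.Perm ι, (wordExponent fun j => (w (τ j), j))
      = (wordExponent fun j => (f j, j)) ↔ w ∘ τ = f :=
    fun τ => wordExponent_graph_injective.eq_iff
  simp_rw [hgraph, Finset.sum_boole]

lemma coeff_monomialSieve [CharP R 2] [DecidableEq ι] [Fintype σ] [DecidableEq σ] {f : ι → σ}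
    (hf : Function.Injective f) {m : σ →₀ ℕ} (hm : m.degree = Fintype.card ι) :
    coeff (wordExponent fun j => (f j, j)) (monomialSieve ι R m)
      = if m = wordExponent f then 1 else 0 := by
  by_cases hmf : m = wordExponent f
  · subst hmf
    have hfix : ({τ | f ∘ τ = f} : Finset (Equiv.Perm ι)) = {1} := by
      ext τ
      simp only [mem_filter, mem_univ, true_and, mem_singleton]
      refine ⟨fun h => Equiv.ext (congrFun (hf.comp_left (h.trans (Function.comp_id f).symm))),
        fun h => h ▸ rfl⟩
    rw [if_pos rfl, monomialSieve_wordExponent, coeff_permanent_labelMatrix, hfix,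
      card_singleton, Nat.cast_one]
  · obtain ⟨w, rfl⟩ := exists_wordExponent_eq_of_degree_eq_card m hm
    have hnone : ({τ | w ∘ τ = f} : Finset (Equiv.Perm ι)) = ∅ := by
      refine filter_eq_empty_iff.mpr ?_
      rintro τ - rfl
      exact hmf (wordExponent_comp_equiv w τ).symm
    rw [if_neg hmf, monomialSieve_wordExponent, coeff_permanent_labelMatrix, hnone, card_empty,
      Nat.cast_zero]

end Labels

section Ring

variable {R : Type*} [CommRing R] [CharP R 2] [DecidableEq ι]

lemma permanent_eq_det (M : Matrix ι ι R) : M.permanent = M.det := by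
  rw [Matrix.det_apply, Matrix.permanent]
  refine Finset.sum_congr rfl fun τ _ => ?_
  rcases Int.units_eq_one_or (Equiv.Perm.sign τ) with h | h <;> simp [h, CharTwo.neg_eq]

lemma permanent_labelMatrix_eq_zero {w : ι → σ} (hw : ¬ Function.Injective w) :
    (labelMatrix R w).permanent = 0 := by
  obtain ⟨t, u, hwtu, htu⟩ : ∃ t u, w t = w u ∧ t ≠ u := by
    simpa [Function.Injective] using hw
  rw [permanent_eq_det]
  exact Matrix.det_zero_of_row_eq htu (funext fun j => by simp [labelMatrix, hwtu])

lemma monomialSieve_eq_zero [Fintype σ] {m : σ →₀ ℕ}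
    (hm : m.degree = Fintype.card ι) (h : ∃ a, 1 < m a) : monomialSieve ι R m = 0 := by
  obtain ⟨w, rfl⟩ := exists_wordExponent_eq_of_degree_eq_card m hm
  have hw : ¬ Function.Injective w := by
    simpa [injective_iff_wordExponent_le_one] using h
  rw [monomialSieve_wordExponent, permanent_labelMatrix_eq_zero hw]

end Ring

end MultilinearSieve

open MultilinearSieve

/-- multilinear sieving: Let `P` be a polynomial over a field of
characteristic 2 that is homogeneous of degree `k` in the variables `x₁,…,x_n`,
let `L` be a set of `k` labels, and for each subset `A ⊆ L` substitute
`xᵢ ↦ zᵢ^A = Σ_{j∈A} z_{i,j}`.  Then `Q = Σ_{A ⊆ L} P(z₁^A,…,z_n^A)` is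
identically zero iff `P` has no multilinear monomial of degree `k`. -/
theorem stmt7 {F : Type*} [Field F] [CharP F 2] {n k : ℕ}
    (P : MvPolynomial (Fin n) F) (hP : P.IsHomogeneous k) :
    (∑ A ∈ (Finset.univ : Finset (Fin k)).powerset,
        MvPolynomial.eval₂ MvPolynomial.C
          (fun i => ∑ j ∈ A, (MvPolynomial.X (i, j) :
            MvPolynomial (Fin n × Fin k) F)) P) = 0 ↔
      ¬ ∃ m ∈ P.support, (∀ i, m i ≤ 1) ∧ (∑ i, m i) = k := by
  have hdeg : ∀ m ∈ P.support, m.degree = Fintype.card (Fin k) := fun m hm => by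
    by_contra h
    exact mem_support_iff.mp hm (hP.coeff_eq_zero (by rwa [Fintype.card_fin] at h))
  rw [sum_powerset_eval₂_eq_sum_monomialSieve]
  constructor
  · rintro hQ ⟨m, hm, hlin, -⟩
    obtain ⟨f, rfl⟩ := exists_wordExponent_eq_of_degree_eq_card m (hdeg m hm)
    have hf := injective_iff_wordExponent_le_one.mpr hlin
    have hcoeff := congrArg (coeff (wordExponent fun j => (f j, j))) hQ
    rw [coeff_sum, sum_congr rfl fun m' hm' => by
      rw [coeff_C_mul, coeff_monomialSieve hf (hdeg m' hm')]] at hcoeff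
    simp only [mul_ite, mul_one, mul_zero, sum_ite_eq', if_pos hm, coeff_zero] at hcoeff
    exact mem_support_iff.mp hm hcoeff
  · intro hnone
    refine sum_eq_zero fun m hm => ?_
    rw [monomialSieve_eq_zero (hdeg m hm), mul_zero]
    by_contra! hlin
    exact hnone ⟨m, hm, hlin, by rw [← Finsupp.degree_eq_sum, hdeg m hm, Fintype.card_fin]⟩
end
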